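/- Let 0 < τ ≤ 1/4 and let q₂ be a complex number with |q₂ − iτ/2| < τ/10 and P(q₂,τ) = 0. Set q₂⁻ := q₂ − (τ/4)·e^{3πi/4}. Then 0 < |q₂⁻| ≤ 15τ/32 and 0 < arg(q₂⁻) ≤ arctan((24 − 5√2)/(5√2 − 4)) < π/2, where arg denotes the principal argument. -/

import Mathlib

open Real Complex

noncomputable def Ppoly (τ : ℝ) (z : ℂ) : ℂ :=
  z ^ 3 + (Complex.I - 1 / (4 * (π : ℂ)) - Complex.I / (τ : ℂ) ^ 2) * z ^ 2
    - z / 4 - Complex.I / 4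

/-!
Writing `z = q₂ - (τ/4) e^{3πi/4}` and `c = iτ/2 - (τ/4) e^{3πi/4} = τ (√2/8 + (1/2 - √2/8) i)`,
we have `z - c = q₂ - iτ/2`, so `z` lies in the disc of radius `τ/10` about `c`. That disc lies in
the open first quadrant; its farthest point from `0` is at distance `‖c‖ + τ/10 ≤ 15τ/32`, and every
point of it has slope `im/re` at most `(c.im + τ/10) / (c.re - τ/10) = (24 - 5√2) / (5√2 - 4)`.
-/

namespace Complex

theorem arg_eq_arctan_of_re_pos {z : ℂ} (h : 0 < z.re) : arg z = Real.arctan (z.im / z.re) := by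
  rw [← tan_arg, Real.arctan_tan (neg_pi_div_two_lt_arg_iff.2 (.inl h))
    (arg_lt_pi_div_two_iff.2 (.inl h))]

theorem arg_pos_of_im_pos {z : ℂ} (h : 0 < z.im) : 0 < arg z :=
  (arg_nonneg_iff.2 h.le).lt_of_ne fun h0 => h.ne' (arg_eq_zero_iff.1 h0.symm).2

theorem arg_mem_Ioc_of_norm_sub_lt {z c : ℂ} {r : ℝ} (hz : ‖z - c‖ < r) (hre : r < c.re)
    (him : r ≤ c.im) : 0 < arg z ∧ arg z ≤ Real.arctan ((c.im + r) / (c.re - r)) := by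
  have hre' : |z.re - c.re| < r := (abs_re_le_norm (z - c)).trans_lt hz
  have him' : |z.im - c.im| < r := (abs_im_le_norm (z - c)).trans_lt hz
  rw [abs_lt] at hre' him'
  have hz_re : 0 < z.re := by linarith
  refine ⟨arg_pos_of_im_pos (by linarith), ?_⟩
  rw [arg_eq_arctan_of_re_pos hz_re]
  refine Real.arctan_strictMono.monotone ?_
  rw [div_le_div_iff₀ hz_re (by linarith)]
  nlinarith

theorem exp_three_pi_div_four_mul_I :
    exp (3 * π * I / 4) = ((-(√2 / 2) : ℝ) : ℂ) + ((√2 / 2 : ℝ) : ℂ) * I := by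
  have hcos : Real.cos (3 * π / 4) = -(√2 / 2) := by
    rw [show 3 * π / 4 = π - π / 4 by ring, Real.cos_pi_sub, Real.cos_pi_div_four]
  have hsin : Real.sin (3 * π / 4) = √2 / 2 := by
    rw [show 3 * π / 4 = π - π / 4 by ring, Real.sin_pi_sub, Real.sin_pi_div_four]
  rw [show 3 * (π : ℂ) * I / 4 = ((3 * π / 4 : ℝ) : ℂ) * I by push_cast; ring, exp_mul_I,
    ← ofReal_cos, ← ofReal_sin, hcos, hsin]

end Complex

theorem statement6 (τ : ℝ) (hτ0 : 0 < τ) (q₂ : ℂ)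
    (hq₂ : ‖q₂ - Complex.I * (τ : ℂ) / 2‖ < τ / 10) :
    0 < ‖q₂ - ((τ : ℂ) / 4) * Complex.exp (3 * (π : ℂ) * Complex.I / 4)‖ ∧
    ‖q₂ - ((τ : ℂ) / 4) * Complex.exp (3 * (π : ℂ) * Complex.I / 4)‖ ≤ 15 * τ / 32 ∧
    0 < Complex.arg (q₂ - ((τ : ℂ) / 4) * Complex.exp (3 * (π : ℂ) * Complex.I / 4)) ∧
    Complex.arg (q₂ - ((τ : ℂ) / 4) * Complex.exp (3 * (π : ℂ) * Complex.I / 4)) ≤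
      Real.arctan ((24 - 5 * Real.sqrt 2) / (5 * Real.sqrt 2 - 4)) ∧
    Real.arctan ((24 - 5 * Real.sqrt 2) / (5 * Real.sqrt 2 - 4)) < π / 2 := by
  set z := q₂ - ((τ : ℂ) / 4) * Complex.exp (3 * (π : ℂ) * Complex.I / 4)
  set c := Complex.I * (τ : ℂ) / 2 - ((τ : ℂ) / 4) * Complex.exp (3 * (π : ℂ) * Complex.I / 4)
  have hzc : ‖z - c‖ < τ / 10 := by
    convert hq₂ using 2
    ring
  have hs : √2 ^ 2 = 2 := Real.sq_sqrt zero_le_two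
  have hs_lo : (1.414 : ℝ) ≤ √2 := by nlinarith [Real.sqrt_nonneg 2]
  have hc_re : c.re = τ * √2 / 8 := by simp [c, Complex.exp_three_pi_div_four_mul_I]; ring
  have hc_im : c.im = τ / 2 - τ * √2 / 8 := by simp [c, Complex.exp_three_pi_div_four_mul_I]; ring
  -- `‖c‖² = τ² (5/16 - √2/8)`, and `59/160 = 15/32 - 1/10` leaves almost no room, hence `1.414`.
  have hc_norm : ‖c‖ ≤ 59 * τ / 160 := by
    refine (pow_le_pow_iff_left₀ (norm_nonneg c) (by positivity) two_ne_zero).1 ?_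
    rw [Complex.sq_norm, Complex.normSq_apply, hc_re, hc_im]
    nlinarith
  obtain ⟨harg_pos, harg_le⟩ :=
    Complex.arg_mem_Ioc_of_norm_sub_lt hzc (by rw [hc_re]; nlinarith) (by rw [hc_im]; nlinarith)
  have hslope : (c.im + τ / 10) / (c.re - τ / 10) = (24 - 5 * √2) / (5 * √2 - 4) := by
    rw [hc_re, hc_im, div_eq_div_iff (by nlinarith) (by nlinarith)]
    ring
  refine ⟨norm_pos_iff.2 fun h => by simp [h] at harg_pos, ?_, harg_pos, hslope ▸ harg_le,
    Real.arctan_lt_pi_div_two _⟩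
  calc ‖z‖ ≤ ‖z - c‖ + ‖c‖ := norm_le_norm_sub_add z c
    _ ≤ 15 * τ / 32 := by linarith
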